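/- arXiv:2201.08760 — 3 statements merged into one kernel-verified Lean document; each statement's English description precedes it below -/
import Mathlib

section
/- Let g : [0,∞) → ℝ be measurable with |g(u)| ≤ M_g, and for x > 0 let f(x) = ∫₀^∞ g(u) cosh(u/2)/(sinh²(u/2)+x) du. Then for every ξ > 0 and natural number K, |f^{(K+1)}(ξ)| ≤ M_g (K+1)! π ξ^{-3/2-K} ∏_{k=1}^{K+1} (2k−1)/(2k). -/
/-!
Differentiating under the integral sign, which is legitimate because for `x` near `ξ` every
`x`-derivative of the integrand is dominated by its value at `ξ / 2`, gives
`f⁽ⁿ⁾(x) = (-1)ⁿ n! ∫₀^∞ g(u) cosh(u/2) / (sinh²(u/2) + x)ⁿ⁺¹ du`.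
Bounding `|g| ≤ M_g`, the substitutions `t = sinh(u/2)`, `t = √ξ s` and `s = tan θ` turn the
remaining integral into `2 ξ^(1/2 - (n+1)) ∫₀^{π/2} cos²ⁿ θ dθ`, a Wallis integral.
-/

open Real MeasureTheory Set

lemma integral_cos_pow_even_zero_pi_div_two (m : ℕ) :
    ∫ θ in (0 : ℝ)..π / 2, cos θ ^ (2 * m) =
      π / 2 * ∏ k ∈ Finset.Icc 1 m, (2 * (k : ℝ) - 1) / (2 * k) := by
  induction m with
  | zero => simp
  | succ m ih =>
    rw [Finset.prod_Icc_succ_top (by omega), ← mul_assoc, ← ih,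
      show 2 * (m + 1) = 2 * m + 2 by ring, integral_cos_pow]
    simp only [cos_pi_div_two, sin_zero, mul_zero, sub_zero, ne_eq, add_eq_zero, one_ne_zero,
      and_false, not_false_eq_true, zero_pow, zero_mul, zero_div, zero_add]
    push_cast
    ring

lemma tan_image_Ioo_zero_pi_div_two : tan '' Ioo 0 (π / 2) = Ioi 0 := by
  refine Subset.antisymm ?_ fun t (ht : 0 < t) => ?_
  · rintro _ ⟨θ, hθ, rfl⟩
    exact tan_pos_of_pos_of_lt_pi_div_two hθ.1 hθ.2
  · exact ⟨arctan t, ⟨arctan_pos.2 ht, arctan_lt_pi_div_two t⟩, tan_arctan t⟩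

lemma cos_ne_zero_of_mem_Ioo {θ : ℝ} (hθ : θ ∈ Ioo 0 (π / 2)) : cos θ ≠ 0 :=
  (cos_pos_of_mem_Ioo ⟨by linarith [hθ.1, pi_pos], hθ.2⟩).ne'

lemma abs_deriv_tan_smul_inv_tan_sq_add_one_pow (m : ℕ) {θ : ℝ} (hθ : θ ∈ Ioo 0 (π / 2)) :
    |1 / cos θ ^ 2| • ((tan θ ^ 2 + 1) ^ (m + 1))⁻¹ = cos θ ^ (2 * m) := by
  have hc := cos_ne_zero_of_mem_Ioo hθ
  have h : tan θ ^ 2 + 1 = (cos θ ^ 2)⁻¹ := by rw [add_comm, ← inv_one_add_tan_sq hc, inv_inv]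
  rw [smul_eq_mul, h, abs_of_pos (by positivity), inv_pow, inv_inv, pow_mul]
  field_simp
  ring

lemma hasDerivWithinAt_tan_Ioo {θ : ℝ} (hθ : θ ∈ Ioo 0 (π / 2)) :
    HasDerivWithinAt tan (1 / cos θ ^ 2) (Ioo 0 (π / 2)) θ :=
  (hasDerivAt_tan (cos_ne_zero_of_mem_Ioo hθ)).hasDerivWithinAt

lemma injOn_tan_Ioo : InjOn tan (Ioo 0 (π / 2)) :=
  injOn_tan.mono (Ioo_subset_Ioo_left (by linarith [pi_pos]))

lemma integrableOn_inv_sq_add_one_pow (m : ℕ) :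
    IntegrableOn (fun t : ℝ => ((t ^ 2 + 1) ^ (m + 1))⁻¹) (Ioi 0) := by
  rw [← tan_image_Ioo_zero_pi_div_two, integrableOn_image_iff_integrableOn_abs_deriv_smul
    measurableSet_Ioo (fun _ => hasDerivWithinAt_tan_Ioo) injOn_tan_Ioo]
  exact ((continuous_cos.pow _).integrableOn_Icc.mono_set Ioo_subset_Icc_self).congr_fun
    (fun θ hθ => (abs_deriv_tan_smul_inv_tan_sq_add_one_pow m hθ).symm) measurableSet_Ioo

lemma integral_inv_sq_add_one_pow (m : ℕ) :
    ∫ t in Ioi (0 : ℝ), ((t ^ 2 + 1) ^ (m + 1))⁻¹ =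
      π / 2 * ∏ k ∈ Finset.Icc 1 m, (2 * (k : ℝ) - 1) / (2 * k) := by
  rw [← tan_image_Ioo_zero_pi_div_two, integral_image_eq_integral_abs_deriv_smul
      measurableSet_Ioo (fun _ => hasDerivWithinAt_tan_Ioo) injOn_tan_Ioo,
    setIntegral_congr_fun measurableSet_Ioo
      (fun θ hθ => abs_deriv_tan_smul_inv_tan_sq_add_one_pow m hθ),
    ← integral_Ioc_eq_integral_Ioo, ← intervalIntegral.integral_of_le (by positivity),
    integral_cos_pow_even_zero_pi_div_two]

lemma inv_sq_add_pow_sqrt_mul {c : ℝ} (hc : 0 ≤ c) (m : ℕ) (s : ℝ) :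
    (((√c * s) ^ 2 + c) ^ (m + 1))⁻¹ = (c ^ (m + 1))⁻¹ * ((s ^ 2 + 1) ^ (m + 1))⁻¹ := by
  rw [← mul_inv, ← mul_pow, mul_pow, sq_sqrt hc]
  ring

lemma integrableOn_inv_sq_add_pow {c : ℝ} (hc : 0 < c) (m : ℕ) :
    IntegrableOn (fun t : ℝ => ((t ^ 2 + c) ^ (m + 1))⁻¹) (Ioi 0) := by
  have h := integrableOn_Ioi_comp_mul_left_iff (fun t : ℝ => ((t ^ 2 + c) ^ (m + 1))⁻¹) 0
    (sqrt_pos.2 hc)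
  rw [mul_zero] at h
  refine h.1 ?_
  simp only [inv_sq_add_pow_sqrt_mul hc.le]
  exact (integrableOn_inv_sq_add_one_pow m).const_mul _

lemma integral_inv_sq_add_pow {c : ℝ} (hc : 0 < c) (m : ℕ) :
    ∫ t in Ioi (0 : ℝ), ((t ^ 2 + c) ^ (m + 1))⁻¹ =
      √c / c ^ (m + 1) * (π / 2 * ∏ k ∈ Finset.Icc 1 m, (2 * (k : ℝ) - 1) / (2 * k)) := by
  have h := integral_comp_mul_left_Ioi' (fun t : ℝ => ((t ^ 2 + c) ^ (m + 1))⁻¹) 0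
    (sqrt_pos.2 hc)
  simp only [mul_zero, inv_sq_add_pow_sqrt_mul hc.le, integral_const_mul,
    integral_inv_sq_add_one_pow, smul_eq_mul] at h
  rw [← h]
  ring

lemma sinh_half_image_Ioi : (fun u => sinh (u / 2)) '' Ioi 0 = Ioi 0 := by
  refine Subset.antisymm ?_ fun t (ht : 0 < t) => ?_
  · rintro _ ⟨u, hu, rfl⟩
    exact sinh_pos_iff.2 (half_pos hu)
  · exact ⟨2 * arsinh t, by simpa using arsinh_pos_iff.2 ht, by simp⟩

lemma hasDerivAt_sinh_half (u : ℝ) :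
    HasDerivAt (fun u => sinh (u / 2)) (cosh (u / 2) / 2) u := by
  simpa [div_eq_mul_inv] using ((hasDerivAt_id u).div_const 2).sinh

lemma injOn_sinh_half : InjOn (fun u => sinh (u / 2)) (Ioi 0) :=
  (sinh_strictMono.comp (strictMono_id.div_const two_pos)).injective.injOn

lemma integrableOn_cosh_half_mul_comp_sinh_half {h : ℝ → ℝ} (hh : IntegrableOn h (Ioi 0)) :
    IntegrableOn (fun u => cosh (u / 2) * h (sinh (u / 2))) (Ioi 0) := by
  rw [← sinh_half_image_Ioi, integrableOn_image_iff_integrableOn_abs_deriv_smul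
    measurableSet_Ioi (fun u _ => (hasDerivAt_sinh_half u).hasDerivWithinAt) injOn_sinh_half] at hh
  refine IntegrableOn.congr_fun (hh.const_mul 2) (fun u _ => ?_) measurableSet_Ioi
  rw [smul_eq_mul, abs_of_pos (by positivity)]
  ring

lemma integral_cosh_half_mul_comp_sinh_half (h : ℝ → ℝ) :
    ∫ u in Ioi (0 : ℝ), cosh (u / 2) * h (sinh (u / 2)) = 2 * ∫ t in Ioi (0 : ℝ), h t := by
  conv_rhs => rw [← sinh_half_image_Ioi, integral_image_eq_integral_abs_deriv_smul
    measurableSet_Ioi (fun u _ => (hasDerivAt_sinh_half u).hasDerivWithinAt) injOn_sinh_half,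
    ← integral_const_mul]
  refine setIntegral_congr_fun measurableSet_Ioi fun u _ => ?_
  rw [smul_eq_mul, abs_of_pos (by positivity)]
  ring

lemma integrableOn_cosh_half_div_sinh_half_sq_add_pow {c : ℝ} (hc : 0 < c) (m : ℕ) :
    IntegrableOn (fun u => cosh (u / 2) / (sinh (u / 2) ^ 2 + c) ^ (m + 1)) (Ioi 0) :=
  integrableOn_cosh_half_mul_comp_sinh_half (integrableOn_inv_sq_add_pow hc m)

lemma integral_cosh_half_div_sinh_half_sq_add_pow {c : ℝ} (hc : 0 < c) (m : ℕ) :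
    ∫ u in Ioi (0 : ℝ), cosh (u / 2) / (sinh (u / 2) ^ 2 + c) ^ (m + 1) =
      π * √c / c ^ (m + 1) * ∏ k ∈ Finset.Icc 1 m, (2 * (k : ℝ) - 1) / (2 * k) := by
  rw [show (fun u => cosh (u / 2) / (sinh (u / 2) ^ 2 + c) ^ (m + 1)) =
      fun u => cosh (u / 2) * ((sinh (u / 2) ^ 2 + c) ^ (m + 1))⁻¹ from rfl,
    integral_cosh_half_mul_comp_sinh_half (fun t => ((t ^ 2 + c) ^ (m + 1))⁻¹),
    integral_inv_sq_add_pow hc]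
  ring

lemma hasDerivAt_div_add_pow (c t : ℝ) (n : ℕ) {x : ℝ} (hx : t + x ≠ 0) :
    HasDerivAt (fun x => c / (t + x) ^ (n + 1)) (-(n + 1) * (c / (t + x) ^ (n + 2))) x := by
  refine ((hasDerivAt_const x c).div (((hasDerivAt_id x).const_add t).fun_pow (n + 1))
    (pow_ne_zero _ hx)).congr_deriv ?_
  simp only [id, Nat.add_sub_cancel, Nat.cast_add, Nat.cast_one]
  field_simp
  ring

section StieltjesTransform

variable {α : Type*} {a s w : α → ℝ} {M : ℝ}

lemma norm_div_add_pow_le (hs : ∀ u, 0 ≤ s u) (haw : ∀ u, |a u| ≤ M * w u) (n : ℕ) {x y : ℝ}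
    (hy : 0 < y) (hyx : y ≤ x) (u : α) :
    ‖a u / (s u + x) ^ (n + 1)‖ ≤ M * (w u / (s u + y) ^ (n + 1)) := by
  have hy' : 0 < s u + y := by linarith [hs u]
  rw [← mul_div_assoc, norm_div, norm_pow, Real.norm_eq_abs, Real.norm_of_nonneg (by linarith)]
  gcongr
  · exact (abs_nonneg _).trans (haw u)
  · exact haw u

variable [MeasurableSpace α] {μ : Measure α}

/-- The Stieltjes transform of order `n + 1` of the image of the measure `a • μ` under `s`. -/
noncomputable def stieltjesTransform (μ : Measure α) (a s : α → ℝ) (n : ℕ) (x : ℝ) : ℝ :=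
  ∫ u, a u / (s u + x) ^ (n + 1) ∂μ

lemma integrable_div_add_pow_of_abs_le (hs : ∀ u, 0 ≤ s u) (haw : ∀ u, |a u| ≤ M * w u)
    (ha : AEStronglyMeasurable a μ) (hsm : AEStronglyMeasurable s μ) (n : ℕ) {x : ℝ}
    (hx : 0 < x) (hw : Integrable (fun u => w u / (s u + x) ^ (n + 1)) μ) :
    Integrable (fun u => a u / (s u + x) ^ (n + 1)) μ :=
  (hw.const_mul M).mono'
    (ha.aemeasurable.div ((hsm.aemeasurable.add_const x).pow_const _)).aestronglyMeasurable
    (ae_of_all _ (norm_div_add_pow_le hs haw n hx le_rfl))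

lemma abs_stieltjesTransform_le (hs : ∀ u, 0 ≤ s u) (haw : ∀ u, |a u| ≤ M * w u) (n : ℕ)
    {x : ℝ} (hx : 0 < x) (hw : Integrable (fun u => w u / (s u + x) ^ (n + 1)) μ) :
    |stieltjesTransform μ a s n x| ≤ M * ∫ u, w u / (s u + x) ^ (n + 1) ∂μ := by
  rw [← integral_const_mul]
  exact norm_integral_le_of_norm_le (hw.const_mul M)
    (ae_of_all _ (norm_div_add_pow_le hs haw n hx le_rfl))

lemma hasDerivAt_stieltjesTransform (hs : ∀ u, 0 ≤ s u)
    (hint : ∀ m : ℕ, ∀ c > 0, Integrable (fun u => a u / (s u + c) ^ (m + 1)) μ)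
    (n : ℕ) {x : ℝ} (hx : 0 < x) :
    HasDerivAt (stieltjesTransform μ a s n) (-(n + 1) * stieltjesTransform μ a s (n + 1) x) x := by
  have hpos : ∀ y ∈ Ioi (x / 2), ∀ u, s u + y ≠ 0 := fun y (hy : x / 2 < y) u => by
    linarith [hs u, half_pos hx]
  have h := hasDerivAt_integral_of_dominated_loc_of_deriv_le (μ := μ)
    (F := fun y u => a u / (s u + y) ^ (n + 1))
    (F' := fun y u => -(n + 1) * (a u / (s u + y) ^ (n + 2)))
    (bound := fun u => (n + 1) * ‖a u / (s u + x / 2) ^ (n + 2)‖)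
    (Ioi_mem_nhds (half_lt_self hx))
    (Filter.eventually_of_mem (Ioi_mem_nhds (half_lt_self hx)) fun y hy =>
      (hint n y ((half_pos hx).trans hy)).aestronglyMeasurable)
    (hint n x hx) (((hint (n + 1) x hx).const_mul _).aestronglyMeasurable)
    (ae_of_all _ fun u y hy => ?_) ((hint (n + 1) _ (half_pos hx)).norm.const_mul _)
    (ae_of_all _ fun u y hy => hasDerivAt_div_add_pow _ _ n (hpos y hy u))
  · unfold stieltjesTransform
    simpa only [integral_const_mul] using h.2
  · have hy' : x / 2 ≤ y := le_of_lt hy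
    rw [norm_mul, norm_neg, Real.norm_of_nonneg (by positivity)]
    gcongr
    refine (norm_div_add_pow_le hs (fun u => (one_mul _).ge) (n + 1) (half_pos hx) hy' u).trans_eq ?_
    rw [one_mul, norm_div, norm_pow, Real.norm_eq_abs,
      Real.norm_of_nonneg (by linarith [hs u, half_pos hx])]

lemma iteratedDeriv_eqOn_stieltjesTransform (hs : ∀ u, 0 ≤ s u)
    (hint : ∀ m : ℕ, ∀ c > 0, Integrable (fun u => a u / (s u + c) ^ (m + 1)) μ)
    {f : ℝ → ℝ} (hf : EqOn f (stieltjesTransform μ a s 0) (Ioi 0)) (n : ℕ) :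
    EqOn (iteratedDeriv n f) (fun x => (-1) ^ n * n.factorial * stieltjesTransform μ a s n x)
      (Ioi 0) := by
  induction n with
  | zero => simpa using hf
  | succ n ih =>
    intro x (hx : 0 < x)
    have hloc := Filter.eventuallyEq_of_mem (isOpen_Ioi.mem_nhds hx) ih
    rw [iteratedDeriv_succ, hloc.deriv_eq,
      ((hasDerivAt_stieltjesTransform hs hint n hx).const_mul _).deriv, Nat.factorial_succ]
    push_cast
    ring

end StieltjesTransform

theorem elliptic_deriv_bound_general (g : ℝ → ℝ) (Mg : ℝ)
    (hgm : Measurable g) (hgb : ∀ u : ℝ, |g u| ≤ Mg)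
    (f : ℝ → ℝ)
    (hf : ∀ x : ℝ, 0 < x →
      f x = ∫ u in Set.Ioi (0:ℝ), g u * Real.cosh (u / 2) / (Real.sinh (u / 2) ^ 2 + x))
    (K : ℕ) (ξ : ℝ) (hξ : 0 < ξ) :
    |iteratedDeriv (K + 1) f ξ| ≤
      Mg * ((K + 1).factorial : ℝ) * π * ξ ^ (-(3:ℝ)/2 - K) *
        ∏ k ∈ Finset.Icc 1 (K + 1), ((2 * (k:ℝ) - 1) / (2 * k)) := by
  set a := fun u => g u * cosh (u / 2)
  set s := fun u => sinh (u / 2) ^ 2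
  have hs : ∀ u, 0 ≤ s u := fun u => sq_nonneg _
  have haw : ∀ u, |a u| ≤ Mg * cosh (u / 2) := fun u => by
    rw [abs_mul, abs_of_pos (cosh_pos _)]
    exact mul_le_mul_of_nonneg_right (hgb u) (cosh_pos _).le
  have hint : ∀ m : ℕ, ∀ c > 0, IntegrableOn (fun u => a u / (s u + c) ^ (m + 1)) (Ioi 0) :=
    fun m c hc => integrable_div_add_pow_of_abs_le hs haw (by fun_prop) (by fun_prop) m hc
      (integrableOn_cosh_half_div_sinh_half_sq_add_pow hc m)
  have hfT : EqOn f (stieltjesTransform (volume.restrict (Ioi 0)) a s 0) (Ioi 0) := fun x hx => by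
    simp only [hf x hx, stieltjesTransform, zero_add, pow_one]
    rfl
  have hrpow : √ξ / ξ ^ (K + 1 + 1) = ξ ^ (-(3:ℝ)/2 - K) := by
    rw [sqrt_eq_rpow, ← rpow_natCast, ← rpow_sub hξ]
    congr 1
    push_cast
    ring
  rw [iteratedDeriv_eqOn_stieltjesTransform hs hint hfT (K + 1) hξ, abs_mul, abs_mul, abs_pow,
    abs_neg, abs_one, one_pow, one_mul, Nat.abs_cast]
  calc _ ≤ ((K + 1).factorial : ℝ) *
        (Mg * ∫ u in Ioi 0, cosh (u / 2) / (sinh (u / 2) ^ 2 + ξ) ^ (K + 1 + 1)) := by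
        gcongr
        exact abs_stieltjesTransform_le hs haw (K + 1) hξ
          (integrableOn_cosh_half_div_sinh_half_sq_add_pow hξ (K + 1))
    _ = _ := by
        rw [integral_cosh_half_div_sinh_half_sq_add_pow hξ, ← hrpow]
        ring

theorem elliptic_deriv_bound (g : ℝ → ℝ) (Mg : ℝ)
    (hgm : Measurable g) (hgb : ∀ u : ℝ, |g u| ≤ Mg)
    (hsupp : HasCompactSupport g)
    (f : ℝ → ℝ)
    (hf : ∀ x : ℝ, 0 < x →
      f x = ∫ u in Set.Ioi (0:ℝ), g u * Real.cosh (u / 2) / (Real.sinh (u / 2) ^ 2 + x))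
    (K : ℕ) (ξ : ℝ) (hξ : 0 < ξ) :
    |iteratedDeriv (K + 1) f ξ| ≤
      Mg * ((K + 1).factorial : ℝ) * π * ξ ^ (-(3:ℝ)/2 - K) *
        ∏ k ∈ Finset.Icc 1 (K + 1), ((2 * (k:ℝ) - 1) / (2 * k)) :=
  elliptic_deriv_bound_general g Mg hgm hgb f hf K ξ hξ
end

section
/- Fix 0 < ε < 1 and n > 1. Among pairs (c, K) with c > 1 and K > 0 real, subject to the constraint ((c−1)/(c+1))^K = ε, the product K · log_c n (i.e., K · ln n / ln c) is minimized at c = 1 + √2, with K = log_c(1/ε) = ln(1/ε)/ln(1+√2). -/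
/-!
Minimizing `F` means maximizing `log c * log ((c + 1) / (c - 1))`. With `p = c - 1` and
`q = 2 / (c - 1)` this is `log (1 + p) * log (1 + q)` under the constraint `p * q = 2`.
Since `u ↦ log (log (1 + exp u))` is concave, `log (1 + p) * log (1 + q)` is at most
`log (1 + √(p * q)) ^ 2`, with equality at `p = q = √2`, i.e. at `c = 1 + √2`.
-/

open Real

lemma log_one_add_exp_pos (u : ℝ) : 0 < log (1 + exp u) :=
  log_pos (by linarith [exp_pos u])

lemma hasDerivAt_log_log_one_add_exp (u : ℝ) :
    HasDerivAt (fun u => log (log (1 + exp u)))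
      (exp u / ((1 + exp u) * log (1 + exp u))) u := by
  have h := (((hasDerivAt_exp u).const_add 1).log (by positivity)).log
    (log_one_add_exp_pos u).ne'
  rwa [div_div] at h

lemma hasDerivAt_exp_div_mul_log_one_add_exp (u : ℝ) :
    HasDerivAt (fun u => exp u / ((1 + exp u) * log (1 + exp u)))
      (exp u * (log (1 + exp u) - exp u) / ((1 + exp u) * log (1 + exp u)) ^ 2) u := by
  have hG := log_one_add_exp_pos u
  have hden : HasDerivAt (fun u => (1 + exp u) * log (1 + exp u))
      (exp u * log (1 + exp u) + (1 + exp u) * (exp u / (1 + exp u))) u :=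
    ((hasDerivAt_exp u).const_add 1).mul
    (((hasDerivAt_exp u).const_add 1).log (by positivity))
  refine ((hasDerivAt_exp u).div hden (mul_pos (by positivity) hG).ne').congr_deriv ?_
  field_simp
  ring

lemma concaveOn_log_log_one_add_exp :
    ConcaveOn ℝ Set.univ (fun u => log (log (1 + exp u))) := by
  refine concaveOn_of_hasDerivWithinAt2_nonpos convex_univ
    (fun u _ => (hasDerivAt_log_log_one_add_exp u).continuousAt.continuousWithinAt)
    (fun u _ => (hasDerivAt_log_log_one_add_exp u).hasDerivWithinAt)
    (fun u _ => (hasDerivAt_exp_div_mul_log_one_add_exp u).hasDerivWithinAt) fun u _ => ?_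
  have hlog_le : log (1 + exp u) ≤ exp u := by
    linarith [log_le_sub_one_of_pos (by positivity : (0 : ℝ) < 1 + exp u)]
  exact div_nonpos_of_nonpos_of_nonneg
    (mul_nonpos_of_nonneg_of_nonpos (exp_pos u).le (by linarith)) (sq_nonneg _)

lemma log_one_add_mul_log_one_add_le {p q : ℝ} (hp : 0 < p) (hq : 0 < q) :
    log (1 + p) * log (1 + q) ≤ log (1 + √(p * q)) ^ 2 := by
  have hmid : (1 / 2 : ℝ) • log p + (1 / 2 : ℝ) • log q = log √(p * q) := by
    rw [log_sqrt (by positivity), log_mul hp.ne' hq.ne', smul_eq_mul, smul_eq_mul]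
    ring
  have hconc := concaveOn_log_log_one_add_exp.2 (Set.mem_univ (log p)) (Set.mem_univ (log q))
    (by norm_num : (0 : ℝ) ≤ 1 / 2) (by norm_num : (0 : ℝ) ≤ 1 / 2) (by norm_num)
  rw [hmid] at hconc
  simp only [smul_eq_mul, exp_log hp, exp_log hq, exp_log (by positivity : 0 < √(p * q))]
    at hconc
  have hp' : 0 < log (1 + p) := log_pos (by linarith)
  have hq' : 0 < log (1 + q) := log_pos (by linarith)
  have hpq' : 0 < log (1 + √(p * q)) := log_pos (by linarith [sqrt_pos.2 (mul_pos hp hq)])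
  rw [← log_le_log_iff (by positivity) (by positivity), log_mul hp'.ne' hq'.ne', log_pow,
    Nat.cast_ofNat]
  linarith

lemma log_mul_log_div_sub_one_le {c : ℝ} (hc : 1 < c) :
    log c * log ((c + 1) / (c - 1)) ≤ log (1 + √2) ^ 2 := by
  have hc' : 0 < c - 1 := by linarith
  have h := log_one_add_mul_log_one_add_le hc' (div_pos two_pos hc')
  rwa [mul_div_cancel₀ _ hc'.ne', add_sub_cancel, one_add_div hc'.ne',
    show c - 1 + 2 = c + 1 by ring] at h

lemma one_add_sqrt_two_add_one_div_sub_one : (1 + √2 + 1) / (1 + √2 - 1) = 1 + √2 := by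
  have h2 : √2 * √2 = 2 := mul_self_sqrt two_pos.le
  have hpos : 0 < √2 := by positivity
  field_simp
  nlinarith

theorem optimal_sampling (ε n : ℝ) (hε : 0 < ε) (hε1 : ε < 1) (hn : 1 < n)
    (F : ℝ → ℝ)
    (hF : ∀ c : ℝ, F c = (Real.log (1 / ε) / Real.log ((c + 1) / (c - 1))) *
      (Real.log n / Real.log c)) :
    (∀ c ∈ Set.Ioi (1:ℝ), F (1 + Real.sqrt 2) ≤ F c) ∧
      Real.logb (1 + Real.sqrt 2) (1 / ε) = Real.log (1 / ε) / Real.log (1 + Real.sqrt 2) := by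
  refine ⟨fun c hc => ?_, rfl⟩
  have hc : 1 < c := hc
  have hε' : 0 < log (1 / ε) := log_pos ((one_lt_div hε).2 hε1)
  have hA : 0 < log c := log_pos hc
  have hB : 0 < log ((c + 1) / (c - 1)) :=
    log_pos ((one_lt_div (by linarith)).2 (by linarith))
  rw [hF, hF, one_add_sqrt_two_add_one_div_sub_one, div_mul_div_comm, div_mul_div_comm,
    ← sq, mul_comm (log ((c + 1) / (c - 1)))]
  exact div_le_div_of_nonneg_left (by positivity [log_pos hn]) (by positivity)
    (log_mul_log_div_sub_one_le hc)
end

section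
/- The function c ↦ ln((c+1)/(c−1)) · ln(c) on (1, ∞) attains its maximum at c = 1 + √2. -/
/-!
Write `ψ t = log (1 + exp t)`. With `t = log (c - 1)` the two factors are `ψ (log 2 - t)` and
`ψ t`, so it suffices that `ψ` is log-concave: the product is then at most
`ψ (log 2 / 2) ^ 2 = log (1 + √2) ^ 2`. Log-concavity holds because `ψ' = 1 - exp (-ψ)`, so
`(log ψ)' = (1 - exp (-ψ)) / ψ` is the slope of the secant of `exp` over `[-ψ, 0]`, which decreases
as `ψ` increases.
-/

open Real Set

noncomputable def softplus (x : ℝ) : ℝ := log (1 + exp x)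

lemma softplus_pos (x : ℝ) : 0 < softplus x :=
  log_pos (lt_add_of_pos_right 1 (exp_pos x))

lemma softplus_log {x : ℝ} (hx : 0 < x) : softplus (log x) = log (1 + x) := by
  rw [softplus, exp_log hx]

lemma monotone_softplus : Monotone softplus := fun _ _ hxy =>
  log_le_log (by positivity) (by gcongr)

lemma exp_softplus (x : ℝ) : exp (softplus x) = 1 + exp x :=
  exp_log (by positivity)

lemma hasDerivAt_softplus (x : ℝ) : HasDerivAt softplus (1 - exp (-softplus x)) x := by
  refine (((hasDerivAt_exp x).const_add 1).log (by positivity)).congr_deriv ?_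
  rw [exp_neg, exp_softplus]
  field_simp
  ring

lemma antitoneOn_one_sub_exp_neg_div : AntitoneOn (fun y => (1 - exp (-y)) / y) (Ioi 0) := by
  intro a ha b hb hab
  have ha' : -a ≠ 0 := neg_ne_zero.2 (ne_of_gt ha)
  have hb' : -b ≠ 0 := neg_ne_zero.2 (ne_of_gt hb)
  have := convexOn_exp.secant_mono (mem_univ 0) (mem_univ (-b)) (mem_univ (-a)) hb' ha'
    (neg_le_neg hab)
  simpa only [exp_zero, sub_zero, div_neg, neg_div, ← neg_sub (1 : ℝ), neg_neg] using this

lemma concaveOn_log_softplus : ConcaveOn ℝ univ (fun x => log (softplus x)) := by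
  have hderiv (x : ℝ) : HasDerivAt (fun x => log (softplus x))
      ((1 - exp (-softplus x)) / softplus x) x :=
    (hasDerivAt_softplus x).log (softplus_pos x).ne'
  refine Antitone.concaveOn_univ_of_deriv (fun x => (hderiv x).differentiableAt) fun a b hab => ?_
  rw [(hderiv a).deriv, (hderiv b).deriv]
  exact antitoneOn_one_sub_exp_neg_div (softplus_pos a) (softplus_pos b) (monotone_softplus hab)

lemma ConcaveOn.mul_le_sq_midpoint_of_log {E : Type*} [AddCommGroup E] [Module ℝ E] {s : Set E}
    {f : E → ℝ} (hf : ConcaveOn ℝ s (fun x => log (f x))) (hpos : ∀ x ∈ s, 0 < f x)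
    {x y : E} (hx : x ∈ s) (hy : y ∈ s) :
    f x * f y ≤ f (midpoint ℝ x y) ^ 2 := by
  have hmid : midpoint ℝ x y ∈ s := hf.1.midpoint_mem hx hy
  have h := hf.2 hx hy (by norm_num : (0:ℝ) ≤ 2⁻¹) (by norm_num : (0:ℝ) ≤ 2⁻¹) (by norm_num)
  have hm : (2⁻¹ : ℝ) • x + (2⁻¹ : ℝ) • y = midpoint ℝ x y := by
    rw [midpoint_eq_smul_add, smul_add, invOf_eq_inv]
  rw [hm, smul_eq_mul, smul_eq_mul] at h
  have hx0 := hpos x hx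
  have hy0 := hpos y hy
  have hm0 := hpos _ hmid
  rw [← log_le_log_iff (by positivity) (by positivity), log_mul hx0.ne' hy0.ne', log_pow]
  push_cast
  linarith

theorem log_product_max (c : ℝ) (hc : 1 < c) :
    Real.log ((c + 1) / (c - 1)) * Real.log c ≤
      Real.log ((1 + Real.sqrt 2 + 1) / (1 + Real.sqrt 2 - 1)) * Real.log (1 + Real.sqrt 2) := by
  have hc1 : 0 < c - 1 := sub_pos.2 hc
  have h2c : 0 < 2 / (c - 1) := by positivity
  have hratio : (c + 1) / (c - 1) = 1 + 2 / (c - 1) := by field_simp; ring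
  have hopt : (1 + √2 + 1) / (1 + √2 - 1) = 1 + √2 := by
    rw [add_sub_cancel_left, div_eq_iff (by positivity)]
    nlinarith [sq_sqrt (zero_le_two : (0 : ℝ) ≤ 2)]
  have hmid : midpoint ℝ (log (2 / (c - 1))) (log (c - 1)) = log √2 := by
    rw [midpoint_eq_smul_add, ← log_mul h2c.ne' hc1.ne', div_mul_cancel₀ _ hc1.ne',
      log_sqrt zero_le_two, invOf_eq_inv, smul_eq_mul, inv_mul_eq_div]
  calc log ((c + 1) / (c - 1)) * log c
      = softplus (log (2 / (c - 1))) * softplus (log (c - 1)) := by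
        rw [softplus_log h2c, softplus_log hc1, hratio, add_sub_cancel]
    _ ≤ softplus (log √2) ^ 2 := hmid ▸ concaveOn_log_softplus.mul_le_sq_midpoint_of_log
        (fun x _ => softplus_pos x) (mem_univ _) (mem_univ _)
    _ = _ := by rw [softplus_log (by positivity), hopt, sq]
end
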